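/- Let P be a smooth hypergraph property with d(P) = r ≥ 1. If H is a (χ^ℓ, P)-critical hypergraph with χ^ℓ(H : P) = k, then the minimum degree of H is at least r(k-1). -/

import Mathlib

/-- A finite hypergraph: finite vertex set, finite edge (name) set, and an
incidence function assigning to each edge its set of endpoints (at least 2).
Edge names outside `edges` are normalized to have empty incidence. -/
structure FinHypergraph where
  verts : Finset ℕ
  edges : Finset ℕ
  inc : ℕ → Finset ℕ
  inc_sub : ∀ e ∈ edges, inc e ⊆ verts
  two_le_inc : ∀ e ∈ edges, 2 ≤ (inc e).card
  inc_empty : ∀ e ∉ edges, inc e = ∅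

namespace FinHypergraph

theorem inc_subset (H : FinHypergraph) (e : ℕ) : H.inc e ⊆ H.verts := by
  by_cases h : e ∈ H.edges
  · exact H.inc_sub e h
  · rw [H.inc_empty e h]; exact Finset.empty_subset _

/-- Degree of a vertex: number of incident edges. -/
def degree (H : FinHypergraph) (v : ℕ) : ℕ :=
  (H.edges.filter (fun e => v ∈ H.inc e)).card

/-- The set of edges incident with `v`. -/
def edgesAt (H : FinHypergraph) (v : ℕ) : Finset ℕ :=
  H.edges.filter (fun e => v ∈ H.inc e)

/-- Degree sum `d(H)`. -/
def degSum (H : FinHypergraph) : ℕ := ∑ v ∈ H.verts, H.degree v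

/-- Maximum degree `Δ(H)` (0 for the empty hypergraph). -/
def maxDegree (H : FinHypergraph) : ℕ := H.verts.sup H.degree

/-- Minimum degree `δ(H)` (0 for the empty hypergraph). -/
def minDegree (H : FinHypergraph) : ℕ :=
  if h : H.verts.Nonempty then H.verts.inf' h H.degree else 0

/-- Induced subhypergraph `H[X]`. -/
def induce (H : FinHypergraph) (X : Finset ℕ) : FinHypergraph where
  verts := X ∩ H.verts
  edges := H.edges.filter (fun e => H.inc e ⊆ X ∩ H.verts)
  inc := fun e =>
    if e ∈ H.edges.filter (fun e => H.inc e ⊆ X ∩ H.verts) then H.inc e else ∅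
  inc_sub := by
    intro e he
    simp only [if_pos he]
    exact (Finset.mem_filter.mp he).2
  two_le_inc := by
    intro e he
    simp only [if_pos he]
    exact H.two_le_inc e (Finset.mem_filter.mp he).1
  inc_empty := by
    intro e he
    simp only [if_neg he]

/-- The hypergraph `H(X)` obtained by shrinking `H` to `X`. -/
def shrink (H : FinHypergraph) (X : Finset ℕ) : FinHypergraph where
  verts := X ∩ H.verts
  edges := H.edges.filter (fun e => 2 ≤ (H.inc e ∩ (X ∩ H.verts)).card)
  inc := fun e =>
    if e ∈ H.edges.filter (fun e => 2 ≤ (H.inc e ∩ (X ∩ H.verts)).card) then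
      H.inc e ∩ (X ∩ H.verts) else ∅
  inc_sub := by
    intro e he
    simp only [if_pos he]
    exact Finset.inter_subset_right
  two_le_inc := by
    intro e he
    simp only [if_pos he]
    exact (Finset.mem_filter.mp he).2
  inc_empty := by
    intro e he
    simp only [if_neg he]

/-- `H - v`. -/
def deleteVert (H : FinHypergraph) (v : ℕ) : FinHypergraph := H.induce (H.verts.erase v)

/-- The empty hypergraph `K_0`. -/
def emptyHG : FinHypergraph :=
  ⟨∅, ∅, fun _ => ∅, fun e he => absurd he (Finset.notMem_empty e),
    fun e he => absurd he (Finset.notMem_empty e), fun _ _ => rfl⟩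

/-- The one-vertex edgeless hypergraph `K_1` on vertex `v`. -/
def singleHG (v : ℕ) : FinHypergraph :=
  ⟨{v}, ∅, fun _ => ∅, fun e he => absurd he (Finset.notMem_empty e),
    fun e he => absurd he (Finset.notMem_empty e), fun _ _ => rfl⟩

/-- FinHypergraph isomorphism. -/
def Iso (H₁ H₂ : FinHypergraph) : Prop :=
  ∃ φ ψ : ℕ → ℕ, Set.BijOn φ ↑H₁.verts ↑H₂.verts ∧ Set.BijOn ψ ↑H₁.edges ↑H₂.edges ∧
    ∀ e ∈ H₁.edges, H₂.inc (ψ e) = (H₁.inc e).image φ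

/-- A class of hypergraphs closed under isomorphism. -/
def IsoClosed (P : Set FinHypergraph) : Prop :=
  ∀ H₁ H₂ : FinHypergraph, Iso H₁ H₂ → H₁ ∈ P → H₂ ∈ P

/-- Hereditary: closed under induced subhypergraphs. -/
def Hereditary (P : Set FinHypergraph) : Prop :=
  ∀ H ∈ P, ∀ X : Finset ℕ, H.induce X ∈ P

/-- A smooth hypergraph property: isomorphism-closed, hereditary and non-trivial. -/
def Smooth (P : Set FinHypergraph) : Prop :=
  IsoClosed P ∧ Hereditary P ∧ (∃ H ∈ P, H.verts.Nonempty) ∧ (∃ H : FinHypergraph, H ∉ P)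

/-- `F(P)`: hypergraphs not in `P` all of whose vertex-deleted subhypergraphs are in `P`. -/
def critFam (P : Set FinHypergraph) : Set FinHypergraph :=
  {H : FinHypergraph | H ∉ P ∧ ∀ v ∈ H.verts, H.deleteVert v ∈ P}

/-- `d(P) = min {δ(G) : G ∈ F(P)}`. -/
noncomputable def dP (P : Set FinHypergraph) : ℕ := sInf (minDegree '' critFam P)

/-- Disjoint union of two hypergraphs. -/
def disjUnion (H₁ H₂ : FinHypergraph) : FinHypergraph where
  verts := H₁.verts ∪ H₂.verts
  edges := H₁.edges ∪ H₂.edges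
  inc := fun e => H₁.inc e ∪ H₂.inc e
  inc_sub := fun e _ => Finset.union_subset_union (H₁.inc_subset e) (H₂.inc_subset e)
  two_le_inc := by
    intro e he
    rcases Finset.mem_union.mp he with h | h
    · exact le_trans (H₁.two_le_inc e h) (Finset.card_le_card Finset.subset_union_left)
    · exact le_trans (H₂.two_le_inc e h) (Finset.card_le_card Finset.subset_union_right)
  inc_empty := by
    intro e he
    rw [Finset.mem_union] at he
    push_neg at he
    simp only [H₁.inc_empty e he.1, H₂.inc_empty e he.2, Finset.empty_union]

/-- Additive: closed under vertex-disjoint unions. -/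
def Additive (P : Set FinHypergraph) : Prop :=
  ∀ H₁ H₂ : FinHypergraph, H₁ ∈ P → H₂ ∈ P → Disjoint H₁.verts H₂.verts →
    Disjoint H₁.edges H₂.edges → disjUnion H₁ H₂ ∈ P

/-- A `(P,L)`-coloring exists: an `L`-coloring each of whose color classes induces
a hypergraph in `P`. -/
def ColorableWith (P : Set FinHypergraph) (H : FinHypergraph) (L : ℕ → Finset ℕ) : Prop :=
  ∃ φ : ℕ → ℕ, (∀ v ∈ H.verts, φ v ∈ L v) ∧
    ∀ c : ℕ, H.induce (H.verts.filter (fun v => φ v = c)) ∈ P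

/-- `H` is `(P,L)`-critical. -/
def Critical (P : Set FinHypergraph) (H : FinHypergraph) (L : ℕ → Finset ℕ) : Prop :=
  ¬ ColorableWith P H L ∧ ∀ v ∈ H.verts, ColorableWith P (H.deleteVert v) L

/-- The `P`-list-chromatic number `χ^ℓ(H : P)`. -/
noncomputable def listChrom (P : Set FinHypergraph) (H : FinHypergraph) : ℕ :=
  sInf {k : ℕ | ∀ L : ℕ → Finset ℕ, (∀ v ∈ H.verts, k ≤ (L v).card) → ColorableWith P H L}

/-- The `P`-chromatic number `χ(H : P)`. -/
noncomputable def chrom (P : Set FinHypergraph) (H : FinHypergraph) : ℕ :=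
  sInf {k : ℕ | ∃ φ : ℕ → ℕ, (∀ v ∈ H.verts, φ v ∈ Finset.range k) ∧
    ∀ c : ℕ, H.induce (H.verts.filter (fun v => φ v = c)) ∈ P}

/-- `(χ^ℓ, P)`-critical: every proper induced subhypergraph has strictly smaller
`P`-list-chromatic number. -/
def ListCritical (P : Set FinHypergraph) (H : FinHypergraph) : Prop :=
  ∀ X : Finset ℕ, X ⊂ H.verts → listChrom P (H.induce X) < listChrom P H

/-- Two vertices lie in a common edge. -/
def Adj (H : FinHypergraph) (u v : ℕ) : Prop := ∃ e ∈ H.edges, u ∈ H.inc e ∧ v ∈ H.inc e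

/-- Connectedness via hyperpaths. -/
def Connected (H : FinHypergraph) : Prop :=
  H.verts.Nonempty ∧ ∀ u ∈ H.verts, ∀ v ∈ H.verts, Relation.ReflTransGen H.Adj u v

/-- `v` is a separating vertex of `H`. -/
def IsSepVert (H : FinHypergraph) (v : ℕ) : Prop :=
  ∃ X Y : Finset ℕ, X ∪ Y = H.verts ∧ X ∩ Y = {v} ∧ 2 ≤ X.card ∧ 2 ≤ Y.card ∧
    ∀ e ∈ H.edges, H.inc e ⊆ X ∨ H.inc e ⊆ Y

/-- `B` is a block of `H`: a maximal connected induced subhypergraph without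
separating vertices. -/
def IsBlock (H B : FinHypergraph) : Prop :=
  ∃ X ⊆ H.verts, B = H.induce X ∧ B.Connected ∧ (∀ v : ℕ, ¬ B.IsSepVert v) ∧
    ∀ Y : Finset ℕ, X ⊂ Y → Y ⊆ H.verts →
      ¬ ((H.induce Y).Connected ∧ ∀ v : ℕ, ¬ (H.induce Y).IsSepVert v)

/-- Multiplicity of the pair `u, v`. -/
def mult (H : FinHypergraph) (u v : ℕ) : ℕ :=
  (H.edges.filter (fun e => H.inc e = {u, v})).card

/-- `H = tK_n`: the complete graph on `n` vertices with each edge of multiplicity `t`. -/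
def IsTK (H : FinHypergraph) (t n : ℕ) : Prop :=
  H.verts.card = n ∧
    (∀ e ∈ H.edges, ∃ u ∈ H.verts, ∃ v ∈ H.verts, u ≠ v ∧ H.inc e = {u, v}) ∧
    ∀ u ∈ H.verts, ∀ v ∈ H.verts, u ≠ v → H.mult u v = t

/-- `H = tC_n`: the cycle on `n` vertices (ordinary edges) with each edge of
multiplicity `t`. -/
def IsTC (H : FinHypergraph) (t n : ℕ) : Prop :=
  3 ≤ n ∧ ∃ f : ℕ → ℕ, Set.InjOn f (Set.Iio n) ∧
    H.verts = (Finset.range n).image f ∧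
    (∀ e ∈ H.edges, ∃ i < n, H.inc e = {f i, f ((i + 1) % n)}) ∧
    ∀ i < n, (H.edges.filter (fun e => H.inc e = {f i, f ((i + 1) % n)})).card = t

/-- A brick: `tC_n` with `n ≥ 3` odd, or `tK_n`. -/
def IsBrick (H : FinHypergraph) : Prop :=
  (∃ t ≥ 1, ∃ n : ℕ, 3 ≤ n ∧ Odd n ∧ IsTC H t n) ∨ (∃ t ≥ 1, ∃ n ≥ 1, IsTK H t n)

/-- `r`-regular. -/
def IsRegular (H : FinHypergraph) (r : ℕ) : Prop := ∀ v ∈ H.verts, H.degree v = r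

/-- Simple: no parallel edges. -/
def Simple (H : FinHypergraph) : Prop :=
  ∀ e ∈ H.edges, ∀ e' ∈ H.edges, e ≠ e' → H.inc e ≠ H.inc e'

/-- The set `V(H, P, L)` of low vertices (for `d(P) = r`). -/
def lowVerts (H : FinHypergraph) (L : ℕ → Finset ℕ) (r : ℕ) : Finset ℕ :=
  H.verts.filter (fun v => H.degree v = r * (L v).card)

end FinHypergraph

open FinHypergraph

/-!
Since `χ^ℓ(H : P) = k`, there are lists `L` of size `k - 1` from which `H` has no
`(P, L)`-coloring, while every `H - v`, having smaller list-chromatic number, has one; so `H` is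
`(P, L)`-critical. Fix `v` and a `(P, L)`-coloring of `H - v`. For each colour `c ∈ L(v)`, adding
`v` to the class of `c` leaves `P`, so a minimal non-`P` induced subhypergraph of that class plus
`v` belongs to `F(P)`, contains `v`, and hence has at least `d(P) = r` edges at `v`. Edges found for
different colours are different, so `deg v ≥ r |L(v)| ≥ r (k - 1)`.
-/

namespace FinHypergraph

variable {P : Set FinHypergraph} {H : FinHypergraph} {X Y S : Finset ℕ} {v : ℕ}
  {L : ℕ → Finset ℕ}

@[ext]
lemma ext {H₁ H₂ : FinHypergraph} (hv : H₁.verts = H₂.verts) (he : H₁.edges = H₂.edges)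
    (hi : H₁.inc = H₂.inc) : H₁ = H₂ := by
  cases H₁; cases H₂; simp_all

@[simp]
lemma induce_verts : (H.induce X).verts = X ∩ H.verts := rfl

lemma mem_induce_edges {e : ℕ} :
    e ∈ (H.induce X).edges ↔ e ∈ H.edges ∧ H.inc e ⊆ X ∩ H.verts :=
  Finset.mem_filter

lemma induce_inc {e : ℕ} :
    (H.induce X).inc e = if e ∈ (H.induce X).edges then H.inc e else ∅ := rfl

lemma induce_induce : (H.induce X).induce Y = H.induce (Y ∩ X) := by
  have hedges : ((H.induce X).induce Y).edges = (H.induce (Y ∩ X)).edges := by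
    ext e
    simp only [mem_induce_edges, induce_verts, induce_inc, Finset.subset_inter_iff]
    grind
  ext1
  · simp [Finset.inter_assoc]
  · exact hedges
  · funext e
    rw [induce_inc, induce_inc, hedges, induce_inc]
    grind [mem_induce_edges]

lemma induce_mem_of_subset (hP : Hereditary P) (hXY : X ⊆ Y) (hY : H.induce Y ∈ P) :
    H.induce X ∈ P := by
  simpa [induce_induce, Finset.inter_eq_left.mpr hXY] using hP _ hY X

lemma degree_eq_card_edgesAt : H.degree v = (H.edgesAt v).card := rfl

lemma mem_edgesAt_induce {e : ℕ} :
    e ∈ (H.induce X).edgesAt v ↔ e ∈ H.edges ∧ H.inc e ⊆ X ∩ H.verts ∧ v ∈ H.inc e := by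
  simp only [edgesAt, Finset.mem_filter, mem_induce_edges, induce_inc]
  grind

lemma edgesAt_induce_mono (h : X ⊆ Y) : (H.induce X).edgesAt v ⊆ (H.induce Y).edgesAt v := by
  intro e he
  rw [mem_edgesAt_induce] at he ⊢
  exact ⟨he.1, he.2.1.trans (Finset.inter_subset_inter_right h), he.2.2⟩

lemma edgesAt_induce_subset : (H.induce X).edgesAt v ⊆ H.edgesAt v := by
  intro e he
  rw [mem_edgesAt_induce] at he
  exact Finset.mem_filter.mpr ⟨he.1, he.2.2⟩

lemma minDegree_le_degree (hv : v ∈ H.verts) : H.minDegree ≤ H.degree v := by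
  rw [minDegree, dif_pos ⟨v, hv⟩]
  exact Finset.inf'_le _ hv

lemma le_minDegree {m : ℕ} (hne : H.verts.Nonempty) (h : ∀ v ∈ H.verts, m ≤ H.degree v) :
    m ≤ H.minDegree := by
  rw [minDegree, dif_pos hne]
  exact Finset.le_inf' hne _ h

lemma dP_le_minDegree {G : FinHypergraph} (hG : G ∈ critFam P) : dP P ≤ G.minDegree :=
  Nat.sInf_le ⟨G, hG, rfl⟩

lemma exists_subset_induce_mem_critFam {T : Finset ℕ} (hT : H.induce T ∉ P) :
    ∃ X ⊆ T, H.induce X ∈ critFam P := by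
  induction T using Finset.strongInduction with
  | H T ih =>
    by_cases hcrit : H.induce T ∈ critFam P
    · exact ⟨T, subset_rfl, hcrit⟩
    obtain ⟨u, huT, -, hdel⟩ : ∃ u ∈ T, u ∈ H.verts ∧ (H.induce T).deleteVert u ∉ P := by
      simpa [critFam, hT] using hcrit
    rw [deleteVert, induce_induce] at hdel
    have hsub : (H.induce T).verts.erase u ∩ T ⊂ T :=
      (Finset.ssubset_iff_of_subset Finset.inter_subset_right).mpr ⟨u, huT, by simp⟩
    obtain ⟨X, hX, hXcrit⟩ := ih _ hsub hdel
    exact ⟨X, hX.trans hsub.subset, hXcrit⟩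

/-- A minimal non-`P` induced subhypergraph of `H[S + v]` lies in `F(P)` and contains `v`. -/
lemma dP_le_degree_induce_insert (hP : Hereditary P) (hv : v ∈ H.verts)
    (hS : H.induce S ∈ P) (hvS : H.induce (insert v S) ∉ P) :
    dP P ≤ (H.induce (insert v S)).degree v := by
  obtain ⟨X, hXT, hX⟩ := exists_subset_induce_mem_critFam hvS
  have hvX : v ∈ X := by
    by_contra hvX
    exact hX.1 (induce_mem_of_subset hP ((Finset.subset_insert_iff_of_notMem hvX).mp hXT) hS)
  calc dP P ≤ (H.induce X).minDegree := dP_le_minDegree hX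
    _ ≤ (H.induce X).degree v := minDegree_le_degree (by simp [hvX, hv])
    _ ≤ (H.induce (insert v S)).degree v := Finset.card_le_card (edgesAt_induce_mono hXT)

/-- An edge at `v` inside both `S c + v` and `S c' + v` would have `v` as its only vertex. -/
lemma sum_degree_induce_insert_le {C : Finset ℕ} {S : ℕ → Finset ℕ}
    (hS : (C : Set ℕ).PairwiseDisjoint S) :
    ∑ c ∈ C, (H.induce (insert v (S c))).degree v ≤ H.degree v := by
  classical
  have hdisj : (C : Set ℕ).PairwiseDisjoint fun c => (H.induce (insert v (S c))).edgesAt v := by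
    intro c hc c' hc' hne
    rw [Function.onFun, Finset.disjoint_left]
    intro e he he'
    rw [mem_edgesAt_induce] at he he'
    have hsingle : H.inc e ⊆ {v} := by
      intro u hu
      rw [Finset.mem_singleton]
      by_contra huv
      have hu₁ := Finset.mem_of_mem_inter_left (he.2.1 hu)
      have hu₂ := Finset.mem_of_mem_inter_left (he'.2.1 hu)
      rw [Finset.mem_insert, or_iff_right huv] at hu₁ hu₂
      exact Finset.disjoint_left.mp (hS hc hc' hne) hu₁ hu₂
    have := (Finset.card_le_card hsingle).trans_eq (Finset.card_singleton v)
    have := H.two_le_inc e he.1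
    omega
  simp only [degree_eq_card_edgesAt]
  rw [← Finset.card_biUnion hdisj]
  exact Finset.card_le_card (Finset.biUnion_subset.mpr fun _ _ => edgesAt_induce_subset)

lemma ColorableWith.mono {L' : ℕ → Finset ℕ} (h : ColorableWith P H L)
    (hL : ∀ u ∈ H.verts, L u ⊆ L' u) : ColorableWith P H L' := by
  obtain ⟨φ, hφL, hφP⟩ := h
  exact ⟨φ, fun u hu => hL u hu (hφL u hu), hφP⟩

lemma ColorableWith.induce (hP : Hereditary P) (h : ColorableWith P H L) :
    ColorableWith P (H.induce X) L := by
  obtain ⟨φ, hφL, hφP⟩ := h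
  refine ⟨φ, fun u hu => hφL u (Finset.mem_of_mem_inter_right hu), fun c => ?_⟩
  rw [induce_induce]
  refine induce_mem_of_subset hP (fun u hu => ?_) (hφP c)
  simp only [Finset.mem_inter, Finset.mem_filter, induce_verts] at hu ⊢
  exact ⟨hu.1.1.2, hu.1.2⟩

lemma exists_coloring_of_colorableWith_induce (hX : X ⊆ H.verts)
    (h : ColorableWith P (H.induce X) L) :
    ∃ φ : ℕ → ℕ, (∀ u ∈ X, φ u ∈ L u) ∧ ∀ c, H.induce (X.filter (φ · = c)) ∈ P := by
  obtain ⟨φ, hφL, hφP⟩ := h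
  have hXV : X ∩ H.verts = X := Finset.inter_eq_left.mpr hX
  refine ⟨φ, by simpa [hXV] using hφL, fun c => ?_⟩
  simpa [induce_induce, hXV, Finset.inter_eq_left.mpr (Finset.filter_subset _ X)] using hφP c

lemma colorableWith_of_induce_insert (hP : Hereditary P) {φ : ℕ → ℕ}
    (hφL : ∀ u ∈ H.verts.erase v, φ u ∈ L u)
    (hφP : ∀ c, H.induce ((H.verts.erase v).filter (φ · = c)) ∈ P) {c : ℕ} (hc : c ∈ L v)
    (hins : H.induce (insert v ((H.verts.erase v).filter (φ · = c))) ∈ P) :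
    ColorableWith P H L := by
  refine ⟨Function.update φ v c, fun u hu => ?_, fun c' => ?_⟩
  · rcases eq_or_ne u v with rfl | huv
    · simpa using hc
    · simpa [huv] using hφL u (Finset.mem_erase.mpr ⟨huv, hu⟩)
  · rcases eq_or_ne c' c with rfl | hc'
    · refine induce_mem_of_subset hP (fun u hu => ?_) hins
      simp only [Finset.mem_filter, Finset.mem_insert, Finset.mem_erase,
        Function.update_apply] at hu ⊢
      grind
    · refine induce_mem_of_subset hP (fun u hu => ?_) (hφP c')
      simp only [Finset.mem_filter, Finset.mem_erase, Function.update_apply] at hu ⊢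
      grind

lemma Critical.dP_mul_card_le_degree (hP : Hereditary P) (hH : Critical P H L)
    (hv : v ∈ H.verts) : dP P * (L v).card ≤ H.degree v := by
  classical
  obtain ⟨φ, hφL, hφP⟩ :=
    exists_coloring_of_colorableWith_induce (Finset.erase_subset v H.verts) (hH.2 v hv)
  have hbad : ∀ c ∈ L v, H.induce (insert v ((H.verts.erase v).filter (φ · = c))) ∉ P :=
    fun c hc hins => hH.1 (colorableWith_of_induce_insert hP hφL hφP hc hins)
  calc dP P * (L v).card = ∑ _c ∈ L v, dP P := by
        rw [Finset.sum_const, smul_eq_mul, mul_comm]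
    _ ≤ ∑ c ∈ L v, (H.induce (insert v ((H.verts.erase v).filter (φ · = c)))).degree v :=
        Finset.sum_le_sum fun c hc => dP_le_degree_induce_insert hP hv (hφP c) (hbad c hc)
    _ ≤ H.degree v := sum_degree_induce_insert_le (Set.pairwiseDisjoint_filter φ _ _)

def ListColorable (P : Set FinHypergraph) (H : FinHypergraph) (m : ℕ) : Prop :=
  ∀ L : ℕ → Finset ℕ, (∀ v ∈ H.verts, m ≤ (L v).card) → ColorableWith P H L

lemma ListColorable.mono {m n : ℕ} (h : ListColorable P H m) (hmn : m ≤ n) :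
    ListColorable P H n :=
  fun L hL => h L fun v hv => hmn.trans (hL v hv)

lemma ListColorable.induce (hP : Hereditary P) {m : ℕ} (h : ListColorable P H m) :
    ListColorable P (H.induce X) m := by
  classical
  intro L hL
  have hcol : ColorableWith P H (fun u => if u ∈ X then L u else Finset.range m) := by
    refine h _ fun u hu => ?_
    split_ifs with huX
    · exact hL u (Finset.mem_inter.mpr ⟨huX, hu⟩)
    · simp
  refine (hcol.induce hP).mono fun u hu => ?_
  simp [(Finset.mem_inter.mp hu).1]

lemma listColorable_listChrom (h : ∃ m, ListColorable P H m) :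
    ListColorable P H (listChrom P H) :=
  Nat.sInf_mem h

lemma verts_nonempty_of_pos_listChrom (hk : 0 < listChrom P H) : H.verts.Nonempty := by
  by_contra hempty
  rw [Finset.not_nonempty_iff_eq_empty] at hempty
  obtain ⟨m, hm⟩ := Nat.nonempty_of_pos_sInf hk
  have h0 : ListColorable P H 0 := fun L _ => hm L (by simp [hempty])
  have : listChrom P H ≤ 0 := Nat.sInf_le h0
  omega

lemma ListCritical.exists_critical (hP : Hereditary P) (hH : ListCritical P H)
    (hk : 0 < listChrom P H) :
    ∃ L : ℕ → Finset ℕ, (∀ v ∈ H.verts, listChrom P H - 1 ≤ (L v).card) ∧ Critical P H L := by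
  have hcol : ListColorable P H (listChrom P H) :=
    listColorable_listChrom (Nat.nonempty_of_pos_sInf hk)
  obtain ⟨L, hL, hnot⟩ : ∃ L : ℕ → Finset ℕ,
      (∀ v ∈ H.verts, listChrom P H - 1 ≤ (L v).card) ∧ ¬ ColorableWith P H L := by
    simpa [ListColorable] using
      Nat.notMem_of_lt_sInf (show listChrom P H - 1 < listChrom P H by omega)
  refine ⟨L, hL, hnot, fun v hv => ?_⟩
  have hdel : ListColorable P (H.deleteVert v) (listChrom P H) := hcol.induce hP
  have hlt : listChrom P (H.deleteVert v) < listChrom P H := hH _ (Finset.erase_ssubset hv)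
  refine (listColorable_listChrom ⟨_, hdel⟩).mono (by omega) L fun u hu => hL u ?_
  exact Finset.mem_of_mem_inter_right hu

end FinHypergraph

theorem stmt9_general (P : Set FinHypergraph) (hP : Smooth P) (r : ℕ) (hr : dP P = r)
    (H : FinHypergraph) (hcrit : ListCritical P H)
    (k : ℕ) (hk : listChrom P H = k) :
    r * (k - 1) ≤ H.minDegree := by
  subst hr hk
  rcases Nat.eq_zero_or_pos (listChrom P H) with hk0 | hk0
  · simp [hk0]
  obtain ⟨L, hL, hLcrit⟩ := hcrit.exists_critical hP.2.1 hk0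
  exact le_minDegree (verts_nonempty_of_pos_listChrom hk0) fun v hv =>
    (Nat.mul_le_mul_left _ (hL v hv)).trans (hLcrit.dP_mul_card_le_degree hP.2.1 hv)

/-- a `(χ^ℓ,P)`-critical hypergraph with `χ^ℓ(H:P) = k` has
minimum degree at least `r(k-1)`. -/
theorem stmt9 (P : Set FinHypergraph) (hP : Smooth P) (r : ℕ) (hr : dP P = r)
    (hr1 : 1 ≤ r) (H : FinHypergraph) (hcrit : ListCritical P H)
    (k : ℕ) (hk : listChrom P H = k) :
    r * (k - 1) ≤ H.minDegree :=
  stmt9_general P hP r hr H hcrit k hk
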